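/- Let L(n) be the Lucas numbers. For all n ≥ 1, L(n) = a(n) + 1 + (−1)^n, where a(n) counts colorings of Z/nZ with at least one black bead and an even number of white beads between cyclically consecutive black beads. -/

import Mathlib

/-- A coloring `c` of the cycle `ZMod n` (`true` = black) is `q`-admissible if
at least one bead is black and between any two cyclically consecutive black
beads the number of white beads is divisible by `q`.  The gap `d` from a black
bead to the next black bead has `d - 1` white beads strictly between. -/
def Admissible (q n : ℕ) (c : ZMod n → Bool) : Prop :=
  (∃ i, c i = true) ∧
  ∀ i : ZMod n, c i = true → ∀ d : ℕ, 0 < d → c (i + (d : ZMod n)) = true →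
    (∀ e : ℕ, 0 < e → e < d → c (i + (e : ZMod n)) = false) → q ∣ (d - 1)



inductive St : Type | B | L | R
deriving DecidableEq

instance : Fintype St := ⟨⟨↑[St.B, St.L, St.R], by decide⟩, fun x => by cases x <;> decide⟩

def stepOK : St → St → Bool := fun x y => ((x == St.L) == (y == St.R))

def pcount : ℕ → St → St → ℕ
  | 0, a, b => if a = b then 1 else 0
  | (m+1), a, b => ∑ c : St, if stepOK a c then pcount m c b else 0

def trc (m : ℕ) : ℕ := ∑ a : St, pcount m a a

example : trc 1 = 1 := by decide
example : trc 2 = 3 := by decide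
example : ∀ a b, pcount 3 a b = pcount 2 a b + pcount 1 a b := by decide

theorem pcount_rec : ∀ m, ∀ a b, pcount (m+3) a b = pcount (m+2) a b + pcount (m+1) a b := by
  intro m
  induction m with
  | zero => decide
  | succ k ih =>
    intro a b
    show (∑ c : St, if stepOK a c then pcount (k+3) c b else 0) = _
    rw [show k+1+2 = k+3 from rfl, show k+1+1 = k+2 from rfl]
    show _ = (∑ c : St, if stepOK a c then pcount (k+2) c b else 0)
      + (∑ c : St, if stepOK a c then pcount (k+1) c b else 0)
    rw [← Finset.sum_add_distrib]
    apply Finset.sum_congr rfl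
    intro c _
    rw [ih c b]
    split <;> simp

theorem trc_rec (m : ℕ) : trc (m+3) = trc (m+2) + trc (m+1) := by
  unfold trc
  rw [← Finset.sum_add_distrib]
  exact Finset.sum_congr rfl fun a _ => pcount_rec m a a
def PathT (m : ℕ) (a b : St) : Type :=
  {f : Fin (m+1) → St // f 0 = a ∧ f (Fin.last m) = b ∧
    ∀ i : Fin m, stepOK (f i.castSucc) (f i.succ) = true}

instance (m a b) : Fintype (PathT m a b) := by unfold PathT; infer_instance

def pathEquiv (m : ℕ) (a b : St) :
    PathT (m+1) a b ≃ Σ c : {c : St // stepOK a c = true}, PathT m c.1 b where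
  toFun := fun ⟨f, h0, hl, hs⟩ =>
    ⟨⟨f 1, by have := hs 0; simpa [h0] using this⟩,
     ⟨f ∘ Fin.succ, rfl, by simpa [Fin.succ_last] using hl,
      fun i => by have := hs i.succ; rw [← Fin.succ_castSucc] at this; exact this⟩⟩
  invFun := fun ⟨⟨c, hc⟩, ⟨g, g0, gl, gs⟩⟩ =>
    ⟨Fin.cons a g, by simp, by
      rw [show (Fin.last (m+1)) = (Fin.last m).succ from rfl]
      simpa using gl,
     fun i => by
      induction i using Fin.cases with
      | zero => simpa [g0] using hc
      | succ j =>
        have : (j.succ).castSucc = (j.castSucc).succ := (Fin.succ_castSucc j).symm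
        rw [this]
        simpa using gs j⟩
  left_inv := fun ⟨f, h0, hl, hs⟩ => by
    apply Subtype.ext
    simp only
    funext i
    induction i using Fin.cases with
    | zero => simpa using h0.symm
    | succ j => simp
  right_inv := fun ⟨⟨c, hc⟩, ⟨g, g0, gl, gs⟩⟩ => by
    simp only at g0
    subst g0
    apply Sigma.ext
    · apply Subtype.ext
      show (Fin.cons a g : Fin (m+2) → St) 1 = g 0
      rfl
    · apply heq_of_eq
      apply Subtype.ext
      show (Fin.cons a g : Fin (m+2) → St) ∘ Fin.succ = g
      funext i
      simp

theorem card_path : ∀ m a b, Fintype.card (PathT m a b) = pcount m a b := by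
  intro m
  induction m with
  | zero =>
    intro a b
    show _ = if a = b then 1 else 0
    split
    · next h =>
      subst h
      apply Fintype.card_eq_one_iff.mpr
      refine ⟨⟨fun _ => a, rfl, rfl, fun i => i.elim0⟩, ?_⟩
      rintro ⟨f, h0, hl, _⟩
      apply Subtype.ext
      funext i
      show f i = a
      have hi : i = 0 := Fin.ext (Nat.lt_one_iff.mp i.isLt)
      rw [hi, h0]
    · next h =>
      apply Fintype.card_eq_zero_iff.mpr
      constructor
      rintro ⟨f, h0, hl, _⟩
      exact h (h0 ▸ hl ▸ rfl)
  | succ m ih =>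
    intro a b
    rw [Fintype.card_congr (pathEquiv m a b), Fintype.card_sigma]
    show _ = ∑ c : St, if stepOK a c then pcount m c b else 0
    have h1 : ∑ i : {c // stepOK a c = true}, Fintype.card (PathT m i.1 b)
        = ∑ i : {c // stepOK a c = true}, pcount m i.1 b :=
      Finset.sum_congr rfl fun c _ => ih c.1 b
    rw [h1, ← Finset.sum_subtype (Finset.univ.filter fun c => stepOK a c = true)
      (by simp) (fun c => pcount m c b), Finset.sum_filter]
def CPath (n : ℕ) : Type :=
  {f : Fin (n+1) → St // f (Fin.last n) = f 0 ∧
    ∀ i : Fin n, stepOK (f i.castSucc) (f i.succ) = true}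

instance (n) : Fintype (CPath n) := by unfold CPath; infer_instance


lemma card_cpath (n : ℕ) : Fintype.card (CPath n) = trc n := by
  classical
  set P : (Fin (n+1) → St) → Prop := fun f =>
    f (Fin.last n) = f 0 ∧ ∀ i : Fin n, stepOK (f i.castSucc) (f i.succ) = true with hP
  have h1 : Fintype.card (CPath n) = (Finset.univ.filter P).card :=
    Fintype.card_of_subtype _ (by simp [hP, CPath])
  have h2 : ∀ a : St, Fintype.card (PathT n a a)
      = ((Finset.univ.filter P).filter (fun f => f 0 = a)).card := by
    intro a
    rw [Finset.filter_filter]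
    apply Fintype.card_of_subtype
    intro f
    simp only [Finset.mem_filter, Finset.mem_univ, true_and, hP, PathT]
    constructor
    · rintro ⟨h0, hl, hs⟩
      exact ⟨rfl, h0⟩
    · rintro ⟨h0, hl, hs⟩
      exact ⟨⟨by rw [hl, h0], hs⟩, h0⟩
  rw [h1, Finset.card_eq_sum_card_fiberwise
    (f := fun f => f 0) (t := Finset.univ) (fun x _ => Finset.mem_univ _)]
  unfold trc
  apply Finset.sum_congr rfl
  intro a _
  rw [← card_path n a a, h2 a]
def WalkCond (n : ℕ) (t : ZMod n → St) : Prop :=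
  ∀ i, stepOK (t i) (t (i+1)) = true

section
variable (n : ℕ) [NeZero n]

lemma zmod_cast_val (z : ZMod n) : ((z.val : ℕ) : ZMod n) = z :=
  ZMod.natCast_rightInverse z

def walkEquiv : {t : ZMod n → St // WalkCond n t} ≃ CPath n where
  toFun := fun ⟨t, ht⟩ =>
    ⟨fun i : Fin (n+1) => t ((i.val : ℕ) : ZMod n),
      by simp [Fin.last, ZMod.natCast_self],
      by
        intro i
        have := ht ((i.val : ℕ) : ZMod n)
        have h2 : (((i.val + 1 : ℕ)) : ZMod n) = ((i.val : ℕ) : ZMod n) + 1 := by push_cast; ring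
        simpa [Fin.castSucc, Fin.succ, h2] using this⟩
  invFun := fun ⟨f, hl, hs⟩ =>
    ⟨fun z => f ⟨z.val, lt_of_lt_of_le z.val_lt (Nat.le_succ n)⟩, by
      intro z
      show stepOK (f ⟨z.val, lt_of_lt_of_le z.val_lt (Nat.le_succ n)⟩)
        (f ⟨(z+1).val, lt_of_lt_of_le (z+1).val_lt (Nat.le_succ n)⟩) = true
      have hzv : z.val < n := z.val_lt
      by_cases h : z.val + 1 < n
      · have hval : (z + 1).val = z.val + 1 := by
          conv_lhs => rw [← zmod_cast_val n z]
          rw [← Nat.cast_one, ← Nat.cast_add, ZMod.val_cast_of_lt h]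
        have := hs ⟨z.val, hzv⟩
        have e1 : (⟨z.val, hzv⟩ : Fin n).castSucc = ⟨z.val, by omega⟩ := rfl
        have e2 : (⟨z.val, hzv⟩ : Fin n).succ = ⟨z.val + 1, by omega⟩ := rfl
        rw [e1, e2] at this
        convert this using 3
        exact Fin.ext hval
      · have hn : z.val + 1 = n := by omega
        have hz1 : z + 1 = 0 := by
          rw [← zmod_cast_val n z, ← Nat.cast_one, ← Nat.cast_add, hn, ZMod.natCast_self]
        have := hs ⟨z.val, hzv⟩
        have e1 : (⟨z.val, hzv⟩ : Fin n).castSucc = ⟨z.val, by omega⟩ := rfl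
        have e2 : (⟨z.val, hzv⟩ : Fin n).succ = Fin.last n := by
          apply Fin.ext; simp [Fin.last, hn]
        rw [e1, e2, hl] at this
        have e3 : f ⟨(z+1).val, lt_of_lt_of_le (z+1).val_lt (Nat.le_succ n)⟩ = f 0 := by
          have h4 : (z+1).val = 0 := by rw [hz1, ZMod.val_zero]
          have e4 : (⟨(z+1).val, lt_of_lt_of_le (z+1).val_lt (Nat.le_succ n)⟩ : Fin (n+1)) = 0 :=
            Fin.ext h4
          rw [e4]
        rw [e3]
        exact this⟩
  left_inv := fun ⟨t, ht⟩ => by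
    apply Subtype.ext
    funext z
    show t _ = t z
    rw [zmod_cast_val]
  right_inv := fun ⟨f, hl, hs⟩ => by
    apply Subtype.ext
    funext i
    show f _ = f i
    by_cases h : i.val < n
    · congr 1
      apply Fin.ext
      exact ZMod.val_cast_of_lt h
    · have hn : i.val = n := by omega
      have h1 : (((i.val : ℕ)) : ZMod n) = 0 := by rw [hn, ZMod.natCast_self]
      have h2 : (⟨(((i.val : ℕ) : ZMod n)).val,
          lt_of_lt_of_le (ZMod.val_lt _) (Nat.le_succ n)⟩ : Fin (n+1)) = 0 := by
        apply Fin.ext; simp [h1]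
      rw [h2]
      have : i = Fin.last n := Fin.ext hn
      rw [this, hl]
end

section
variable (n : ℕ) [NeZero n]

noncomputable def gap (c : ZMod n → Bool) (i : ZMod n) : ℕ :=
  sInf {j : ℕ | c (i - (j : ZMod n)) = true}

variable {n}

lemma gap_nonempty {c : ZMod n → Bool} (hc : ∃ i0, c i0 = true) (i : ZMod n) :
    {j : ℕ | c (i - (j : ZMod n)) = true}.Nonempty := by
  obtain ⟨i0, h0⟩ := hc
  refine ⟨(i - i0).val, ?_⟩
  show c _ = true
  rw [zmod_cast_val]
  simpa [sub_sub_cancel] using h0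

lemma gap_spec {c : ZMod n → Bool} (hc : ∃ i0, c i0 = true) (i : ZMod n) :
    c (i - ((gap n c i : ℕ) : ZMod n)) = true :=
  Nat.sInf_mem (gap_nonempty hc i)

lemma gap_min {c : ZMod n → Bool} (i : ZMod n) {j : ℕ} (hj : j < gap n c i) :
    c (i - (j : ZMod n)) = false := by
  have := Nat.notMem_of_lt_sInf hj
  simpa using this

lemma gap_eq_zero_iff {c : ZMod n → Bool} (hc : ∃ i0, c i0 = true) (i : ZMod n) :
    gap n c i = 0 ↔ c i = true := by
  constructor
  · intro h
    have := gap_spec hc i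
    rw [h] at this
    simpa using this
  · intro h
    apply Nat.sInf_eq_zero.mpr
    left
    simpa using h

lemma gap_succ {c : ZMod n → Bool} (hc : ∃ i0, c i0 = true) (i : ZMod n)
    (h : c i = false) : gap n c i = gap n c (i - 1) + 1 := by
  set k := gap n c (i - 1) with hk
  apply le_antisymm
  · apply Nat.sInf_le
    show c (i - ((k + 1 : ℕ) : ZMod n)) = true
    have : i - ((k + 1 : ℕ) : ZMod n) = (i - 1) - (k : ZMod n) := by push_cast; ring
    rw [this]
    exact gap_spec hc (i - 1)
  · apply le_csInf (gap_nonempty hc i)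
    intro j hj
    match j with
    | 0 =>
      exfalso
      simp only [Set.mem_setOf_eq, Nat.cast_zero, sub_zero] at hj
      rw [h] at hj; exact Bool.false_ne_true hj
    | (j' + 1) =>
      have hj' : c ((i - 1) - (j' : ZMod n)) = true := by
        have : (i - 1) - (j' : ZMod n) = i - ((j' + 1 : ℕ) : ZMod n) := by push_cast; ring
        rw [this]; exact hj
      have : k ≤ j' := Nat.sInf_le hj'
      omega

variable (n)

noncomputable def enc (c : ZMod n → Bool) : ZMod n → St := fun i =>
  if c i = true then St.B else if Odd (gap n c i) then St.L else St.R

def dec (t : ZMod n → St) : ZMod n → Bool := fun i => t i == St.B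

variable {n}

lemma dec_eq_true_iff (t : ZMod n → St) (i : ZMod n) : dec n t i = true ↔ t i = St.B := by
  simp [dec]

lemma walk_enc {c : ZMod n → Bool} (hadm : Admissible 2 n c) : WalkCond n (enc n c) := by
  intro i
  have hc := hadm.1
  by_cases h1 : c (i + 1) = true
  · have he1 : enc n c (i + 1) = St.B := by simp [enc, h1]
    by_cases h0 : c i = true
    · have he0 : enc n c i = St.B := by simp [enc, h0]
      rw [he0, he1]; rfl
    · -- use admissibility to show gap is even
      have h0' : c i = false := by simpa using h0
      have hkpos : gap n c i ≠ 0 := fun h => h0 ((gap_eq_zero_iff hc i).mp h)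
      set k := gap n c i with hk
      have hi0 : c (i - (k : ZMod n)) = true := gap_spec hc i
      have hval : c ((i - (k : ZMod n)) + ((k + 1 : ℕ) : ZMod n)) = true := by
        have : (i - (k : ZMod n)) + ((k + 1 : ℕ) : ZMod n) = i + 1 := by push_cast; ring
        rw [this]; exact h1
      have hmid : ∀ e : ℕ, 0 < e → e < k + 1 →
          c ((i - (k : ZMod n)) + (e : ZMod n)) = false := by
        intro e he hek
        have hek' : e ≤ k := by omega
        have : (i - (k : ZMod n)) + (e : ZMod n) = i - (((k - e : ℕ)) : ZMod n) := by
          rw [Nat.cast_sub hek']; ring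
        rw [this]
        apply gap_min
        omega
      have hdvd : 2 ∣ (k + 1) - 1 := hadm.2 _ hi0 (k+1) (by omega) hval hmid
      have hkeven : ¬ Odd k := by
        simp only [Nat.add_sub_cancel] at hdvd
        rw [Nat.odd_iff]; omega
      have he0 : enc n c i = St.R := by simp [enc, h0']; exact Nat.not_odd_iff_even.mp hkeven
      rw [he0, he1]; rfl
  · have h1' : c (i + 1) = false := by simpa using h1
    have hg : gap n c (i + 1) = gap n c i + 1 := by
      have := gap_succ hc (i + 1) h1'
      simpa using this
    by_cases h0 : c i = true
    · have hk0 : gap n c i = 0 := (gap_eq_zero_iff hc i).mpr h0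
      have he0 : enc n c i = St.B := by simp [enc, h0]
      have he1 : enc n c (i + 1) = St.L := by
        simp [enc, h1', hg, hk0]
      rw [he0, he1]; rfl
    · have h0' : c i = false := by simpa using h0
      by_cases hodd : Odd (gap n c i)
      · have he0 : enc n c i = St.L := by simp [enc, h0', hodd]
        have he1 : enc n c (i + 1) = St.R := by
          have : ¬ Odd (gap n c (i+1)) := by
            rw [hg]
            rw [Nat.odd_iff] at hodd ⊢
            omega
          simp [enc, h1', this]
        rw [he0, he1]; rfl
      · have he0 : enc n c i = St.R := by simp [enc, h0', hodd]
        have he1 : enc n c (i + 1) = St.L := by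
          have : Odd (gap n c (i+1)) := by
            rw [hg]
            rw [Nat.odd_iff] at hodd ⊢
            omega
          simp [enc, h1', this]
        rw [he0, he1]; rfl
lemma dec_exists {t : ZMod n → St} (hB : ∃ i, t i = St.B) : ∃ i, dec n t i = true := by
  obtain ⟨i, hi⟩ := hB
  exact ⟨i, (dec_eq_true_iff t i).mpr hi⟩

lemma enc_aux {t : ZMod n → St} (ht : WalkCond n t) (hB : ∃ i, t i = St.B) :
    ∀ k, ∀ i : ZMod n, t i ≠ St.B → gap n (dec n t) i = k →
      t i = if Odd k then St.L else St.R := by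
  have hc := dec_exists hB
  intro k
  induction k using Nat.strong_induction_on with
  | _ k ih =>
    intro i hiB hgap
    have hci : dec n t i = false := by
      rcases Bool.eq_false_or_eq_true (dec n t i) with h | h
      · exact absurd ((dec_eq_true_iff t i).mp h) hiB
      · exact h
    have hk0 : k ≠ 0 := by
      intro h
      rw [h] at hgap
      have := (gap_eq_zero_iff hc i).mp hgap
      rw [hci] at this
      exact Bool.false_ne_true this
    have hgs : gap n (dec n t) i = gap n (dec n t) (i - 1) + 1 := gap_succ hc i hci
    match k, hk0 with
    | 1, _ =>
      have hprev : gap n (dec n t) (i - 1) = 0 := by omega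
      have : dec n t (i - 1) = true := (gap_eq_zero_iff hc (i - 1)).mp hprev
      have hB1 : t (i - 1) = St.B := (dec_eq_true_iff t (i-1)).mp this
      have hstep := ht (i - 1)
      rw [sub_add_cancel, hB1] at hstep
      -- stepOK B (t i) = true means t i ≠ R
      cases h : t i with
      | B => exact absurd h hiB
      | L => simp
      | R => rw [h] at hstep; exact absurd hstep (by decide)
    | (k' + 2), _ =>
      have hprev : gap n (dec n t) (i - 1) = k' + 1 := by omega
      have hprevB : t (i - 1) ≠ St.B := by
        intro hb
        have : dec n t (i - 1) = true := (dec_eq_true_iff t (i-1)).mpr hb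
        have := (gap_eq_zero_iff hc (i - 1)).mpr this
        omega
      have hIH := ih (k' + 1) (by omega) (i - 1) hprevB hprev
      have hstep := ht (i - 1)
      rw [sub_add_cancel] at hstep
      by_cases hodd : Odd (k' + 1)
      · rw [if_pos hodd] at hIH
        rw [hIH] at hstep
        have hnotodd : ¬ Odd (k' + 2) := by
          rw [Nat.odd_iff] at hodd ⊢; omega
        rw [if_neg hnotodd]
        cases h : t i with
        | B => exact absurd h hiB
        | L => rw [h] at hstep; exact absurd hstep (by decide)
        | R => rfl
      · rw [if_neg hodd] at hIH
        rw [hIH] at hstep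
        have hodd2 : Odd (k' + 2) := by
          rw [Nat.odd_iff] at hodd ⊢; omega
        rw [if_pos hodd2]
        cases h : t i with
        | B => exact absurd h hiB
        | L => rfl
        | R => rw [h] at hstep; exact absurd hstep (by decide)

lemma enc_dec {t : ZMod n → St} (ht : WalkCond n t) (hB : ∃ i, t i = St.B) :
    enc n (dec n t) = t := by
  funext i
  by_cases h : t i = St.B
  · simp [enc, (dec_eq_true_iff t i).mpr h, h]
  · have hci : ¬ dec n t i = true := fun hh => h ((dec_eq_true_iff t i).mp hh)
    have := enc_aux ht hB (gap n (dec n t) i) i h rfl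
    rw [enc, if_neg hci]
    by_cases hodd : Odd (gap n (dec n t) i)
    · rw [if_pos hodd] at this ⊢; exact this.symm
    · rw [if_neg hodd] at this ⊢; exact this.symm

lemma dec_enc {c : ZMod n → Bool} : dec n (enc n c) = c := by
  funext i
  rcases Bool.eq_false_or_eq_true (c i) with h | h
  · simp [dec, enc, h]
  · have : enc n c i = St.L ∨ enc n c i = St.R := by
      rw [enc, if_neg (by simp [h])]
      split
      · left; rfl
      · right; rfl
    rcases this with h2 | h2 <;> simp [dec, h2, h]

lemma adm_dec {t : ZMod n → St} (ht : WalkCond n t) (hB : ∃ i, t i = St.B) :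
    Admissible 2 n (dec n t) := by
  constructor
  · exact dec_exists hB
  · intro i hi d hd hid hmid
    have hiB : t i = St.B := (dec_eq_true_iff t i).mp hi
    -- d ≤ n
    have hdn : d ≤ n := by
      by_contra hcon
      have hn : (0:ℕ) < n := Nat.pos_of_ne_zero (NeZero.ne n)
      have := hmid n hn (by omega)
      rw [ZMod.natCast_self, add_zero, hi] at this
      exact absurd this (by decide)
    match d, hd with
    | 1, _ => simp
    | (m + 2), _ =>
      -- claim: for 1 ≤ j ≤ m+1, t (i + j) alternates
      have claim : ∀ j, 1 ≤ j → j ≤ m + 1 → t (i + (j : ZMod n)) = if Odd j then St.L else St.R := by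
        intro j
        induction j with
        | zero => omega
        | succ j ihj =>
          intro _ hj2
          by_cases hj0 : j = 0
          · subst hj0
            have hw : dec n t (i + ((1:ℕ) : ZMod n)) = false := hmid 1 one_pos (by omega)
            have hwB : t (i + ((1:ℕ):ZMod n)) ≠ St.B := by
              intro hb
              rw [(dec_eq_true_iff _ _).mpr hb] at hw
              exact absurd hw (by decide)
            have hstep := ht i
            rw [hiB] at hstep
            push_cast
            cases h : t (i + 1) with
            | B => exact absurd (by push_cast at hwB ⊢; exact h) hwB
            | L => simp
            | R =>
              exfalso
              have : t (i + ((1:ℕ):ZMod n)) = St.R := by push_cast; exact h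
              rw [show ((1:ℕ):ZMod n) = 1 by push_cast; rfl] at this
              rw [this] at hstep
              exact absurd hstep (by decide)
          · have hj1 : 1 ≤ j := by omega
            have hIH := ihj hj1 (by omega)
            have hw : dec n t (i + ((j+1 : ℕ) : ZMod n)) = false := hmid (j+1) (by omega) (by omega)
            have hwB : t (i + ((j+1:ℕ):ZMod n)) ≠ St.B := by
              intro hb
              rw [(dec_eq_true_iff _ _).mpr hb] at hw
              exact absurd hw (by decide)
            have hstep := ht (i + (j : ZMod n))
            have hcast : i + (j : ZMod n) + 1 = i + ((j+1 : ℕ) : ZMod n) := by push_cast; ring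
            rw [hcast] at hstep
            by_cases hodd : Odd j
            · rw [if_pos hodd] at hIH
              rw [hIH] at hstep
              have : ¬ Odd (j+1) := by rw [Nat.odd_iff] at hodd ⊢; omega
              rw [if_neg this]
              cases h : t (i + ((j+1:ℕ):ZMod n)) with
              | B => exact absurd h hwB
              | L => rw [h] at hstep; exact absurd hstep (by decide)
              | R => rfl
            · rw [if_neg hodd] at hIH
              rw [hIH] at hstep
              have : Odd (j+1) := by rw [Nat.odd_iff] at hodd ⊢; omega
              rw [if_pos this]
              cases h : t (i + ((j+1:ℕ):ZMod n)) with
              | B => exact absurd h hwB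
              | L => rfl
              | R => rw [h] at hstep; exact absurd hstep (by decide)
      have hlast := claim (m+1) (by omega) le_rfl
      have hstep := ht (i + ((m+1 : ℕ) : ZMod n))
      have hcast : i + ((m+1 : ℕ) : ZMod n) + 1 = i + ((m+2 : ℕ) : ZMod n) := by push_cast; ring
      rw [hcast] at hstep
      have hdB : t (i + ((m+2:ℕ) : ZMod n)) = St.B := (dec_eq_true_iff _ _).mp hid
      rw [hdB, hlast] at hstep
      by_cases hodd : Odd (m+1)
      · rw [if_pos hodd] at hstep
        exact absurd hstep (by decide)
      · rw [Nat.odd_iff] at hodd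
        show 2 ∣ (m + 2) - 1
        omega

noncomputable def admEquiv : {c : ZMod n → Bool // Admissible 2 n c} ≃
    {t : ZMod n → St // WalkCond n t ∧ ∃ i, t i = St.B} where
  toFun := fun ⟨c, hc⟩ =>
    ⟨enc n c, walk_enc hc, by
      obtain ⟨i0, h0⟩ := hc.1
      exact ⟨i0, by simp [enc, h0]⟩⟩
  invFun := fun ⟨t, ht, hB⟩ => ⟨dec n t, adm_dec ht hB⟩
  left_inv := fun ⟨c, hc⟩ => Subtype.ext dec_enc
  right_inv := fun ⟨t, ht, hB⟩ => Subtype.ext (enc_dec ht hB)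

end

instance (n : ℕ) [NeZero n] : DecidablePred (WalkCond n) := by
  intro t; unfold WalkCond; infer_instance

def flipSt : St → St
  | St.B => St.B
  | St.L => St.R
  | St.R => St.L

section
variable {n : ℕ} [NeZero n]

lemma val_add_one (z : ZMod n) :
    (z + 1).val = if z.val + 1 = n then 0 else z.val + 1 := by
  have hzv : z.val < n := z.val_lt
  by_cases h : z.val + 1 = n
  · rw [if_pos h]
    have hz1 : z + 1 = 0 := by
      rw [← zmod_cast_val n z, ← Nat.cast_one, ← Nat.cast_add, h, ZMod.natCast_self]
    rw [hz1, ZMod.val_zero]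
  · rw [if_neg h]
    conv_lhs => rw [← zmod_cast_val n z]
    rw [← Nat.cast_one, ← Nat.cast_add, ZMod.val_cast_of_lt (by omega)]

lemma noB_step {t : ZMod n → St} (ht : WalkCond n t) (hB : ∀ i, t i ≠ St.B)
    (i : ZMod n) : t (i + 1) = flipSt (t i) := by
  have hstep := ht i
  have h1 := hB i
  have h2 := hB (i + 1)
  cases h : t i with
  | B => exact absurd h h1
  | L =>
    rw [h] at hstep
    cases h' : t (i+1) with
    | B => exact absurd h' h2
    | L => rw [h'] at hstep; exact absurd hstep (by decide)
    | R => rfl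
  | R =>
    rw [h] at hstep
    cases h' : t (i+1) with
    | B => exact absurd h' h2
    | L => rfl
    | R => rw [h'] at hstep; exact absurd hstep (by decide)

lemma noB_pow {t : ZMod n → St} (ht : WalkCond n t) (hB : ∀ i, t i ≠ St.B) :
    ∀ k : ℕ, t ((k : ℕ) : ZMod n) = if Even k then t 0 else flipSt (t 0) := by
  intro k
  induction k with
  | zero => simp
  | succ k ih =>
    have hc : ((k + 1 : ℕ) : ZMod n) = ((k:ℕ) : ZMod n) + 1 := by push_cast; ring
    rw [hc, noB_step ht hB, ih]
    by_cases he : Even k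
    · rw [if_pos he, if_neg (by simpa [Nat.even_add_one] using he)]
    · rw [if_neg he, if_pos (by simpa [Nat.even_add_one] using he)]
      cases h : t 0 with
      | B => exact absurd h (hB 0)
      | L => rfl
      | R => rfl

end

lemma card_noB (n : ℕ) [NeZero n] :
    Fintype.card {t : ZMod n → St // WalkCond n t ∧ ¬∃ i, t i = St.B} =
      if Even n then 2 else 0 := by
  by_cases he : Even n
  · rw [if_pos he]
    have hn2 : 2 ≤ n := by
      have := Nat.pos_of_ne_zero (NeZero.ne n)
      rcases he with ⟨m, hm⟩
      omega
    -- two explicit walks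
    set T1 : ZMod n → St := fun z => if Even z.val then St.L else St.R with hT1
    set T2 : ZMod n → St := fun z => if Even z.val then St.R else St.L with hT2
    have hwalk : ∀ (x y : St), (∀ z : ZMod n, (if Even z.val then x else y) ≠ St.B) →
        x ≠ y → stepOK x y = true → stepOK y x = true →
        WalkCond n (fun z => if Even z.val then x else y) := by
      intro x y _ _ hxy hyx z
      have hv := val_add_one z
      by_cases h : z.val + 1 = n
      · rw [if_pos h] at hv
        have hzodd : ¬ Even z.val := by
          intro hez
          rcases he with ⟨m, hm⟩; rcases hez with ⟨l, hl⟩; omega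
        simp only [hv]
        rw [if_neg hzodd, if_pos (by norm_num)]
        exact hyx
      · rw [if_neg h] at hv
        simp only [hv]
        by_cases hez : Even z.val
        · rw [if_pos hez, if_neg (by simpa [Nat.even_add_one] using hez)]
          exact hxy
        · rw [if_neg hez, if_pos (by simpa [Nat.even_add_one] using hez)]
          exact hyx
    have hT1w : WalkCond n T1 := hwalk St.L St.R (by intro z; split <;> decide)
      (by decide) (by decide) (by decide)
    have hT2w : WalkCond n T2 := hwalk St.R St.L (by intro z; split <;> decide)
      (by decide) (by decide) (by decide)
    have hT1B : ¬∃ i, T1 i = St.B := by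
      rintro ⟨i, hi⟩
      rw [hT1] at hi
      by_cases h : Even i.val <;> simp [h] at hi
    have hT2B : ¬∃ i, T2 i = St.B := by
      rintro ⟨i, hi⟩
      rw [hT2] at hi
      by_cases h : Even i.val <;> simp [h] at hi
    let e : {t : ZMod n → St // WalkCond n t ∧ ¬∃ i, t i = St.B} ≃ Bool :=
      { toFun := fun t => t.1 0 == St.L
        invFun := fun b => if b then ⟨T1, hT1w, hT1B⟩ else ⟨T2, hT2w, hT2B⟩
        left_inv := by
          rintro ⟨t, ht, hnB⟩
          have hB : ∀ i, t i ≠ St.B := by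
            intro i hi; exact hnB ⟨i, hi⟩
          have key : ∀ z : ZMod n, t z = if Even z.val then t 0 else flipSt (t 0) := by
            intro z
            conv_lhs => rw [← zmod_cast_val n z]
            exact noB_pow ht hB z.val
          cases h0 : t 0 with
          | B => exact absurd h0 (hB 0)
          | L =>
            simp only [h0]
            rw [show ((St.L == St.L) : Bool) = true from rfl, if_pos rfl]
            apply Subtype.ext
            funext z
            show T1 z = t z
            rw [key z, h0, hT1]
            rfl
          | R =>
            simp only [h0]
            rw [show ((St.R == St.L) : Bool) = false from rfl, if_neg (show ¬((false:Bool) = true) by decide)]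
            apply Subtype.ext
            funext z
            show T2 z = t z
            rw [key z, h0, hT2]
            rfl
        right_inv := by
          intro b
          cases b with
          | true =>
            simp only [if_pos rfl]
            show (T1 0 == St.L) = true
            rw [hT1]
            simp [ZMod.val_zero]
          | false =>
            simp only [if_neg (show ¬((false:Bool) = true) by decide)]
            show (T2 0 == St.L) = false
            rw [hT2]
            simp [ZMod.val_zero] }
    rw [Fintype.card_congr e, Fintype.card_bool]
  · rw [if_neg he]
    apply Fintype.card_eq_zero_iff.mpr
    constructor
    rintro ⟨t, ht, hnB⟩
    have hB : ∀ i, t i ≠ St.B := by intro i hi; exact hnB ⟨i, hi⟩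
    have h1 : t ((n : ℕ) : ZMod n) = t 0 := by rw [ZMod.natCast_self]
    have h2 := noB_pow ht hB n
    rw [if_neg (by simpa using he)] at h2
    rw [h1] at h2
    cases h0 : t 0 with
    | B => exact absurd h0 (hB 0)
    | L => rw [h0] at h2; exact absurd h2 (by decide)
    | R => rw [h0] at h2; exact absurd h2 (by decide)

set_option linter.unusedSectionVars false

lemma card_split (n : ℕ) [NeZero n] :
    Fintype.card {t : ZMod n → St // WalkCond n t} =
      Fintype.card {t : ZMod n → St // WalkCond n t ∧ ∃ i, t i = St.B} +
      Fintype.card {t : ZMod n → St // WalkCond n t ∧ ¬∃ i, t i = St.B} := by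
  classical
  rw [Fintype.card_of_subtype (Finset.univ.filter fun t : ZMod n → St => WalkCond n t)
      (by intro x; simp),
    Fintype.card_of_subtype ((Finset.univ.filter fun t : ZMod n → St => WalkCond n t).filter
      (fun t => ∃ i, t i = St.B)) (by intro x; simp [Finset.mem_filter]),
    Fintype.card_of_subtype ((Finset.univ.filter fun t : ZMod n → St => WalkCond n t).filter
      (fun t => ¬∃ i, t i = St.B)) (by intro x; simp [Finset.mem_filter])]
  exact (Finset.card_filter_add_card_filter_not _).symm

lemma L_eq_trc (L : ℕ → ℤ) (hL0 : L 0 = 2) (hL1 : L 1 = 1)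
    (hLrec : ∀ n, L (n+2) = L (n+1) + L n) :
    ∀ k : ℕ, L (k+1) = (trc (k+1) : ℤ) ∧ L (k+2) = (trc (k+2) : ℤ) := by
  intro k
  induction k with
  | zero =>
    constructor
    · rw [hL1, show trc 1 = 1 from by decide]; norm_num
    · rw [hLrec 0, hL0, hL1, show trc 2 = 3 from by decide]; norm_num
  | succ k ih =>
    refine ⟨ih.2, ?_⟩
    rw [show k+1+2 = k+3 from rfl, hLrec (k+1), trc_rec k]
    push_cast
    rw [ih.1, ih.2]

/-- `L n = a n + 1 + (-1) ^ n` where `a n` counts `2`-admissible colorings. -/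
theorem stmt17 (L : ℕ → ℤ) (hL0 : L 0 = 2) (hL1 : L 1 = 1)
    (hLrec : ∀ n : ℕ, L (n + 2) = L (n + 1) + L n) :
    ∀ n : ℕ, 1 ≤ n →
      L n = (Nat.card {c : ZMod n → Bool // Admissible 2 n c} : ℤ) +
        1 + (-1) ^ n := by
  intro n hn
  haveI : NeZero n := ⟨by omega⟩
  obtain ⟨k, rfl⟩ : ∃ k, n = k + 1 := ⟨n - 1, by omega⟩
  have hA : Nat.card {c : ZMod (k+1) → Bool // Admissible 2 (k+1) c}
      = Fintype.card {t : ZMod (k+1) → St // WalkCond (k+1) t ∧ ∃ i, t i = St.B} := by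
    rw [Nat.card_congr (admEquiv (n := k+1)), Nat.card_eq_fintype_card]
  have hW : Fintype.card {t : ZMod (k+1) → St // WalkCond (k+1) t} = trc (k+1) := by
    rw [← Nat.card_eq_fintype_card, Nat.card_congr (walkEquiv (k+1)),
      Nat.card_eq_fintype_card, card_cpath]
  have hsplit := card_split (k+1)
  have hnoB := card_noB (k+1)
  have hLt := (L_eq_trc L hL0 hL1 hLrec k).1
  rw [hLt, hA]
  rw [hW, hnoB] at hsplit
  by_cases he : Even (k+1)
  · rw [if_pos he] at hsplit
    rw [he.neg_one_pow]
    rw [hsplit]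
    push_cast
    ring
  · rw [if_neg he] at hsplit
    rw [(Nat.not_even_iff_odd.mp he).neg_one_pow]
    rw [hsplit]
    push_cast
    ring
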